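/- arXiv:0712.2435 — 2 statements merged into one kernel-verified Lean document; each statement's English description precedes it below -/
import Mathlib

section
/- For every index a ∈ {0,1,2,3}, the entrywise complex conjugates of the matrices Γ_{L|a} and Γ_{R|a} satisfy (Γ_{L|a})* = −Γ_{R|a} and (Γ_{R|a})* = −Γ_{L|a}. -/
noncomputable section

open Matrix Quaternion

/-- The basis `e_a = (i·1, e₁, e₂, e₃)` of the complexified quaternions `ℂ ⊗ ℍ`,
realized as quaternions with complex coefficients.  Here `e 0` is the complex
imaginary unit times the quaternion `1`, and `e 1, e 2, e 3` are the quaternion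
imaginary units (satisfying `eᵢ eⱼ = -δᵢⱼ + εᵢⱼᵏ eₖ`). -/
def e : Fin 4 → Quaternion ℂ
  | 0 => ⟨Complex.I, 0, 0, 0⟩
  | 1 => ⟨0, 1, 0, 0⟩
  | 2 => ⟨0, 0, 1, 0⟩
  | 3 => ⟨0, 0, 0, 1⟩

/-- The ℂ-bilinear inner product, defined by `2⟨x,y⟩ = x·ȳ + y·x̄` (a scalar in ℂ,
extracted as the real quaternion component).  Here `star` is quaternionic
conjugation, which is ℂ-linear on `Quaternion ℂ` (it fixes `re` and negates the
imaginary quaternion components). -/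
def ip (x y : Quaternion ℂ) : ℂ := (x * star y + y * star x).re / 2

/-- `(Γ_{L|a})_{cd} = ⟨e_c, e_a e_d⟩`. -/
def ΓL (a : Fin 4) : Matrix (Fin 4) (Fin 4) ℂ := Matrix.of fun c d => ip (e c) (e a * e d)

/-- `(Γ_{R|a})_{cd} = ⟨e_c, e_d e_a⟩`. -/
def ΓR (a : Fin 4) : Matrix (Fin 4) (Fin 4) ℂ := Matrix.of fun c d => ip (e c) (e d * e a)

/-! Coefficientwise complex conjugation `σ` is a ring endomorphism of `ℂ ⊗ ℍ` with
`⟨σx, σy⟩ = conj ⟨x, y⟩`, and `σ e_a = -ē_a` on the basis. Hence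
`conj ⟨e_c, e_a e_d⟩ = ⟨-ē_c, ē_a ē_d⟩ = -⟨ē_c, conj(e_d e_a)⟩ = -⟨e_c, e_d e_a⟩`, because
quaternionic conjugation preserves `⟨·,·⟩`; exchanging `a` and `d` gives the second identity. -/

namespace Quaternion

variable {R S : Type*} [CommRing R] [CommRing S]

def map (f : R → S) (x : ℍ[R]) : ℍ[S] := ⟨f x.re, f x.imI, f x.imJ, f x.imK⟩

section map

variable (f : R → S) (x : ℍ[R])

@[simp] lemma re_map : (map f x).re = f x.re := rfl
@[simp] lemma imI_map : (map f x).imI = f x.imI := rfl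
@[simp] lemma imJ_map : (map f x).imJ = f x.imJ := rfl
@[simp] lemma imK_map : (map f x).imK = f x.imK := rfl

end map

def mapRingHom (f : R →+* S) : ℍ[R] →+* ℍ[S] where
  toFun := map f
  map_one' := by ext <;> simp
  map_mul' x y := by ext <;> simp [re_mul, imI_mul, imJ_mul, imK_mul]
  map_zero' := by ext <;> simp
  map_add' x y := by ext <;> simp

@[simp] lemma coe_mapRingHom (f : R →+* S) : ⇑(mapRingHom f) = map f := rfl

end Quaternion

lemma ip_eq_coords (x y : Quaternion ℂ) :
    ip x y = x.re * y.re + x.imI * y.imI + x.imJ * y.imJ + x.imK * y.imK := by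
  simp only [ip, re_add, re_mul, re_star, imI_star, imJ_star, imK_star]
  ring

lemma ip_star_star (x y : Quaternion ℂ) : ip (star x) (star y) = ip x y := by
  simp only [ip_eq_coords, re_star, imI_star, imJ_star, imK_star, neg_mul_neg]

lemma ip_neg_left (x y : Quaternion ℂ) : ip (-x) y = -ip x y := by
  simp only [ip_eq_coords, re_neg, imI_neg, imJ_neg, imK_neg]
  ring

lemma ip_map_conj (x y : Quaternion ℂ) :
    ip (map (starRingEnd ℂ) x) (map (starRingEnd ℂ) y) = starRingEnd ℂ (ip x y) := by
  simp only [ip_eq_coords, re_map, imI_map, imJ_map, imK_map, map_add, map_mul]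

lemma map_conj_e (a : Fin 4) : map (starRingEnd ℂ) (e a) = -star (e a) := by
  ext <;> simp only [re_map, imI_map, imJ_map, imK_map, re_neg, imI_neg, imJ_neg, imK_neg,
    re_star, imI_star, imJ_star, imK_star, neg_neg] <;> fin_cases a <;> simp [e]

lemma conj_ip_e_mul_e (a c d : Fin 4) :
    starRingEnd ℂ (ip (e c) (e a * e d)) = -ip (e c) (e d * e a) := by
  rw [← ip_map_conj, ← coe_mapRingHom, map_mul, coe_mapRingHom, map_conj_e, map_conj_e,
    map_conj_e, neg_mul_neg, ← star_mul, ip_neg_left, ip_star_star]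

/-- Eq. (3a): `(Γ_{L|a})* = -Γ_{R|a}` and `(Γ_{R|a})* = -Γ_{L|a}`
(entrywise complex conjugation). -/
theorem gamma_complex_conj (a : Fin 4) :
    (ΓL a).map (starRingEnd ℂ) = -ΓR a ∧ (ΓR a).map (starRingEnd ℂ) = -ΓL a :=
  ⟨ext fun c d => conj_ip_e_mul_e a c d, ext fun c d => conj_ip_e_mul_e d c a⟩
end
end

section
/- For all x₁, x₂, x₃ in the complexified quaternions ℂ⊗ℍ and for X either of the two triple cross products X_L, X_R: (i) orthogonality: ⟨X(x₁,x₂,x₃), x_i⟩ = 0 for each i ∈ {1,2,3}; (ii) the generalized Pythagorean property: det(⟨x_i, x_j⟩)_{i,j=1,2,3} = ⟨X(x₁,x₂,x₃), X(x₁,x₂,x₃)⟩. -/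
noncomputable section

open Matrix Quaternion

/-- The triple cross product `X_L`, defined by
`3! · X_L(x,y,z) = x(ȳz - z̄y) + y(z̄x - x̄z) + z(x̄y - ȳx)`. -/
def XL (x y z : Quaternion ℂ) : Quaternion ℂ :=
  ((6 : ℂ)⁻¹) • (x * (star y * z - star z * y) + y * (star z * x - star x * z)
    + z * (star x * y - star y * x))

/-- The triple cross product `X_R`, defined by
`3! · X_R(x,y,z) = (xȳ - yx̄)z + (yz̄ - zȳ)x + (zx̄ - xz̄)y`. -/
def XR (x y z : Quaternion ℂ) : Quaternion ℂ :=
  ((6 : ℂ)⁻¹) • ((x * star y - y * star x) * z + (y * star z - z * star y) * x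
    + (z * star x - x * star z) * y)

/-! In the coordinates `(re, imI, imJ, imK)` the form `ip` is the plain dot product on `ℂ⁴`, and
both `X_L` and `X_R` turn out to be the generalized cross product `w` of three vectors of `ℂ⁴`:
the vector of first-row cofactors, so that `t ⬝ᵥ w = det [t; x₁; x₂; x₃]`. Orthogonality is then
a determinant with a repeated row. For the Pythagorean property, `w` is the first column of
`adj A` for `A = [0; x₁; x₂; x₃]`, hence `w ⬝ᵥ w = (adj Aᵀ * adj A)₀₀ = (adj (A * Aᵀ))₀₀`, the
`(0,0)` minor of `A * Aᵀ`, which is the Gram matrix of `x₁, x₂, x₃`. This route never divides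
by `w ⬝ᵥ w`, which may vanish over `ℂ` for `w ≠ 0`. -/

namespace Matrix

variable {R : Type*} [CommRing R] {n : ℕ}

def generalizedCrossProduct (v : Fin n → Fin (n + 1) → R) (k : Fin (n + 1)) : R :=
  (-1) ^ (k : ℕ) * det (of fun i l => v i (k.succAbove l))

theorem generalizedCrossProduct_eq_adjugate (v : Fin n → Fin (n + 1) → R) (t : Fin (n + 1) → R)
    (k : Fin (n + 1)) :
    generalizedCrossProduct v k = adjugate (of (Fin.cons t v)) k 0 := by
  rw [adjugate_fin_succ_eq_det_submatrix, Fin.succAbove_zero, Fin.val_zero, zero_add]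
  rfl

theorem dotProduct_generalizedCrossProduct (v : Fin n → Fin (n + 1) → R) (t : Fin (n + 1) → R) :
    t ⬝ᵥ generalizedCrossProduct v = det (of (Fin.cons t v)) := by
  rw [det_eq_sum_mul_adjugate_row _ 0]
  simp [dotProduct, generalizedCrossProduct_eq_adjugate v t]

theorem row_dotProduct_generalizedCrossProduct (v : Fin n → Fin (n + 1) → R) (i : Fin n) :
    v i ⬝ᵥ generalizedCrossProduct v = 0 := by
  rw [dotProduct_generalizedCrossProduct]
  exact det_zero_of_row_eq (Fin.succ_ne_zero i).symm rfl

theorem generalizedCrossProduct_dotProduct_self (v : Fin n → Fin (n + 1) → R) :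
    generalizedCrossProduct v ⬝ᵥ generalizedCrossProduct v = det (of v * (of v)ᵀ) := by
  have h := congr_fun₂ (adjugate_mul_distrib (of (Fin.cons 0 v)) (of (Fin.cons 0 v))ᵀ) 0 0
  rw [adjugate_fin_succ_eq_det_submatrix, ← adjugate_transpose, mul_apply] at h
  simp only [transpose_apply, ← generalizedCrossProduct_eq_adjugate, Fin.succAbove_zero,
    Fin.val_zero, add_zero, pow_zero, one_mul] at h
  rw [dotProduct, ← h]
  rfl

end Matrix

theorem ip_eq_dotProduct (x y : ℍ[ℂ]) : ip x y = equivTuple ℂ x ⬝ᵥ equivTuple ℂ y := by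
  simp only [ip, re_add, re_mul, re_star, imI_star, imJ_star, imK_star, mul_neg, sub_neg_eq_add,
    dotProduct, equivTuple_apply, Fin.sum_univ_four, Fin.isValue, cons_val]
  ring

theorem equivTuple_XL (x y z : ℍ[ℂ]) :
    equivTuple ℂ (XL x y z) = generalizedCrossProduct (equivTuple ℂ ∘ ![x, y, z]) := by
  funext k
  fin_cases k <;>
    simp only [XL, smul_add, smul_eq_mul, equivTuple_apply, re_add, re_smul, re_mul, re_sub,
      re_star, imI_star, imJ_star, imK_star, imI_sub, imI_mul, imJ_sub, imJ_mul, imK_sub, imK_mul,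
      imI_add, imI_smul, imJ_add, imJ_smul, imK_add, imK_smul, generalizedCrossProduct,
      Fin.succAbove, Function.comp_apply, det_fin_three, of_apply, cons_val, Fin.isValue,
      Fin.reduceFinMk, Fin.reduceLT, Fin.reduceCastSucc, Fin.reduceSucc, ↓reduceIte] <;>
    ring

theorem equivTuple_XR (x y z : ℍ[ℂ]) :
    equivTuple ℂ (XR x y z) = generalizedCrossProduct (equivTuple ℂ ∘ ![x, y, z]) := by
  funext k
  fin_cases k <;>
    simp only [XR, smul_add, smul_eq_mul, equivTuple_apply, re_add, re_smul, re_mul, re_sub,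
      re_star, imI_star, imJ_star, imK_star, imI_sub, imI_mul, imJ_sub, imJ_mul, imK_sub, imK_mul,
      imI_add, imI_smul, imJ_add, imJ_smul, imK_add, imK_smul, generalizedCrossProduct,
      Fin.succAbove, Function.comp_apply, det_fin_three, of_apply, cons_val, Fin.isValue,
      Fin.reduceFinMk, Fin.reduceLT, Fin.reduceCastSucc, Fin.reduceSucc, ↓reduceIte] <;>
    ring

section

variable {u : Fin 3 → ℍ[ℂ]} {w : ℍ[ℂ]}

theorem ip_eq_zero_of_equivTuple_eq_generalizedCrossProduct
    (hw : equivTuple ℂ w = generalizedCrossProduct (equivTuple ℂ ∘ u)) (i : Fin 3) :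
    ip w (u i) = 0 := by
  rw [ip_eq_dotProduct, hw, dotProduct_comm]
  exact row_dotProduct_generalizedCrossProduct (equivTuple ℂ ∘ u) i

theorem det_ip_eq_ip_self_of_equivTuple_eq_generalizedCrossProduct
    (hw : equivTuple ℂ w = generalizedCrossProduct (equivTuple ℂ ∘ u)) :
    det (of fun i j => ip (u i) (u j)) = ip w w := by
  rw [ip_eq_dotProduct w, hw, generalizedCrossProduct_dotProduct_self]
  congr 1
  ext i j
  simp [ip_eq_dotProduct, mul_apply, dotProduct]

end

/-- The triple cross products `X_L` and `X_R` possess (i) the orthogonality property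
`⟨X(x₁,x₂,x₃), xᵢ⟩ = 0`, and (ii) the generalized Pythagorean property
`det(⟨xᵢ,xⱼ⟩) = ⟨X(x₁,x₂,x₃), X(x₁,x₂,x₃)⟩`. -/
theorem cross_product_properties (x₁ x₂ x₃ : Quaternion ℂ) :
    (ip (XL x₁ x₂ x₃) x₁ = 0 ∧ ip (XL x₁ x₂ x₃) x₂ = 0 ∧ ip (XL x₁ x₂ x₃) x₃ = 0) ∧
    (ip (XR x₁ x₂ x₃) x₁ = 0 ∧ ip (XR x₁ x₂ x₃) x₂ = 0 ∧ ip (XR x₁ x₂ x₃) x₃ = 0) ∧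
    Matrix.det (Matrix.of fun i j : Fin 3 => ip (![x₁, x₂, x₃] i) (![x₁, x₂, x₃] j))
        = ip (XL x₁ x₂ x₃) (XL x₁ x₂ x₃) ∧
    Matrix.det (Matrix.of fun i j : Fin 3 => ip (![x₁, x₂, x₃] i) (![x₁, x₂, x₃] j))
        = ip (XR x₁ x₂ x₃) (XR x₁ x₂ x₃) := by
  have hL := equivTuple_XL x₁ x₂ x₃
  have hR := equivTuple_XR x₁ x₂ x₃
  exact ⟨⟨ip_eq_zero_of_equivTuple_eq_generalizedCrossProduct hL 0,
      ip_eq_zero_of_equivTuple_eq_generalizedCrossProduct hL 1,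
      ip_eq_zero_of_equivTuple_eq_generalizedCrossProduct hL 2⟩,
    ⟨ip_eq_zero_of_equivTuple_eq_generalizedCrossProduct hR 0,
      ip_eq_zero_of_equivTuple_eq_generalizedCrossProduct hR 1,
      ip_eq_zero_of_equivTuple_eq_generalizedCrossProduct hR 2⟩,
    det_ip_eq_ip_self_of_equivTuple_eq_generalizedCrossProduct hL,
    det_ip_eq_ip_self_of_equivTuple_eq_generalizedCrossProduct hR⟩
end
end
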